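/- arXiv:2601.08989 — 2 statements merged into one kernel-verified Lean document; each statement's English description precedes it below -/
import Mathlib

section
/- Let m, n ≥ 2 be integers with n even, let r = ρ_0 be the unit rotation of the first row and c = γ_0 the unit rotation of the first column of the m × n Torus Puzzle. Then the net permutation of the sequence of rotations C_1 R² C_1^{m−1} R (C_1 R C_1^{m−1} R)^{n/2 − 1}, applied left to right, namely the composition (r ∘ c^{m−1} ∘ r ∘ c)^{n/2 − 1} ∘ (r ∘ c^{m−1} ∘ r² ∘ c), equals the transposition of the positions (0, 0) and (0, n − 1), fixing all other positions. -/
/- Unit rightward rotation of row i of the m x n Torus Puzzle. -/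
def rowRot (m n : ℕ) (i : Fin m) : Equiv.Perm (Fin m × Fin n) where
  toFun p := if p.1 = i then (i, finRotate n p.2) else p
  invFun p := if p.1 = i then (i, (finRotate n).symm p.2) else p
  left_inv := by rintro ⟨a, b⟩; by_cases h : a = i <;> simp [h, -finRotate_apply, -finRotate_symm_apply]
  right_inv := by rintro ⟨a, b⟩; by_cases h : a = i <;> simp [h, -finRotate_apply, -finRotate_symm_apply]

/- Unit downward rotation of column j of the m x n Torus Puzzle. -/
def colRot (m n : ℕ) (j : Fin n) : Equiv.Perm (Fin m × Fin n) where
  toFun p := if p.2 = j then (finRotate m p.1, j) else p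
  invFun p := if p.2 = j then ((finRotate m).symm p.1, j) else p
  left_inv := by rintro ⟨a, b⟩; by_cases h : b = j <;> simp [h, -finRotate_apply, -finRotate_symm_apply]
  right_inv := by rintro ⟨a, b⟩; by_cases h : b = j <;> simp [h, -finRotate_apply, -finRotate_symm_apply]

/- The set S(m,n) of the m + n unit rotations. -/
def unitRotations (m n : ℕ) : Set (Equiv.Perm (Fin m × Fin n)) :=
  Set.range (rowRot m n) ∪ Set.range (colRot m n)

/-! Write `r`, `c` for the rotations of the first row and column, `x = (0,0)`, `y = (m-1,0)` and
`τ = swap x y`. On the first row, `c⁻¹` and `τ` agree, so `c⁻¹ r c = τ r τ`. Hence, with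
`σ = r τ`, the word collapses to `σ ^ n * τ * σ` (as `n` is even). But `σ` is the `(n+1)`-cycle
`y ↦ (0,1) ↦ ⋯ ↦ (0,n-1) ↦ x ↦ y`, so `σ ^ n = σ⁻¹` and the word is the conjugate
`σ⁻¹ τ σ = swap (σ⁻¹ x) (σ⁻¹ y) = swap (0,n-1) x`. -/

open Equiv Equiv.Perm

theorem finRotate_mk_of_succ_lt {n j : ℕ} (h : j + 1 < n) :
    finRotate n ⟨j, by omega⟩ = ⟨j + 1, h⟩ := by
  obtain ⟨n, rfl⟩ : ∃ k, n = k + 1 := ⟨n - 1, by omega⟩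
  ext
  rw [coe_finRotate_of_ne_last (by simp [Fin.ext_iff]; omega)]

theorem finRotate_mk_pred {n : ℕ} (hn : 0 < n) : finRotate n ⟨n - 1, by omega⟩ = ⟨0, hn⟩ := by
  obtain ⟨n, rfl⟩ : ∃ k, n = k + 1 := ⟨n - 1, by omega⟩
  exact finRotate_last'

theorem finRotate_pow_self (n : ℕ) : finRotate n ^ n = 1 := by
  rcases lt_or_ge n 2 with hn | hn
  · interval_cases n <;> exact Subsingleton.elim _ _
  · have h := (isCycle_finRotate_of_le hn).orderOf
    rw [support_finRotate_of_le hn, Finset.card_univ, Fintype.card_fin] at h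
    simpa only [h] using pow_orderOf_eq_one (finRotate n)

theorem pow_mul_eq_of_inv_mul_mul_eq {G : Type*} [Group G] {r c τ : G}
    (h : c⁻¹ * r * c = τ * r * τ) (k : ℕ) :
    (r * c⁻¹ * r * c) ^ k * (r * c⁻¹ * r ^ 2 * c) = (r * τ) ^ (2 * k + 2) * τ * (r * τ) := by
  set σ := r * τ
  have hs : c⁻¹ * r * c = τ * σ := by rw [h, mul_assoc]
  have hP : r * c⁻¹ * r * c = σ ^ 2 := calc
    r * c⁻¹ * r * c = r * (c⁻¹ * r * c) := by simp only [mul_assoc]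
    _ = σ ^ 2 := by rw [hs, ← mul_assoc, pow_two]
  have hQ : r * c⁻¹ * r ^ 2 * c = σ ^ 2 * (τ * σ) := calc
    r * c⁻¹ * r ^ 2 * c = (r * c⁻¹ * r * c) * (c⁻¹ * r * c) := by
      simp only [pow_two, mul_assoc, mul_inv_cancel_left]
    _ = σ ^ 2 * (τ * σ) := by rw [hP, hs]
  rw [hP, hQ, ← pow_mul, ← mul_assoc, ← pow_add, ← mul_assoc]

section Rotations

variable {m n : ℕ}

theorem rowRot_apply_of_ne {i : Fin m} {p : Fin m × Fin n} (h : p.1 ≠ i) :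
    rowRot m n i p = p :=
  if_neg h

theorem rowRot_apply_self (i : Fin m) (j : Fin n) : rowRot m n i (i, j) = (i, finRotate n j) :=
  if_pos rfl

theorem colRot_apply_of_ne {j : Fin n} {p : Fin m × Fin n} (h : p.2 ≠ j) :
    colRot m n j p = p :=
  if_neg h

theorem colRot_apply_self (i : Fin m) (j : Fin n) : colRot m n j (i, j) = (finRotate m i, j) :=
  if_pos rfl

theorem colRot_pow_apply (j : Fin n) (k : ℕ) (p : Fin m × Fin n) :
    (colRot m n j ^ k) p = if p.2 = j then ((finRotate m ^ k) p.1, j) else p := by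
  induction k with
  | zero =>
    split_ifs with h
    · rw [pow_zero, pow_zero, one_apply, one_apply, ← h]
    · rfl
  | succ k ih =>
    rw [pow_succ', mul_apply, ih]
    split_ifs with h
    · rw [colRot_apply_self, pow_succ', mul_apply]
    · exact colRot_apply_of_ne h

theorem colRot_pow_self (j : Fin n) : colRot m n j ^ m = 1 := by
  ext1 p
  rw [colRot_pow_apply, finRotate_pow_self, one_apply, one_apply]
  split_ifs with h
  · rw [← h]
  · rfl

end Rotations

section FirstRowCycle

variable {m n : ℕ} (hm : 1 < m) (hn : 1 < n)

/-- The `(n+1)`-cycle `(m-1,0) ↦ (0,1) ↦ ⋯ ↦ (0,n-1) ↦ (0,0) ↦ (m-1,0)`. -/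
def firstRowCycle : Perm (Fin m × Fin n) :=
  rowRot m n ⟨0, by omega⟩ * swap (⟨0, by omega⟩, ⟨0, by omega⟩) (⟨m - 1, by omega⟩, ⟨0, by omega⟩)

theorem firstRowCycle_apply_of_snd_ne {p : Fin m × Fin n} (h : p.2.val ≠ 0) :
    firstRowCycle hm hn p = rowRot m n ⟨0, by omega⟩ p := by
  rw [firstRowCycle, mul_apply, swap_apply_of_ne_of_ne] <;> (rintro rfl; exact h rfl)

theorem firstRowCycle_apply_zero_zero :
    firstRowCycle hm hn (⟨0, by omega⟩, ⟨0, by omega⟩) = (⟨m - 1, by omega⟩, ⟨0, by omega⟩) := by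
  rw [firstRowCycle, mul_apply, swap_apply_left, rowRot_apply_of_ne (by simp [Fin.ext_iff]; omega)]

theorem firstRowCycle_apply_zero_zero_ne :
    firstRowCycle hm hn (⟨0, by omega⟩, ⟨0, by omega⟩) ≠ (⟨0, by omega⟩, ⟨0, by omega⟩) := by
  rw [firstRowCycle_apply_zero_zero]
  simp only [ne_eq, Prod.mk.injEq, Fin.mk.injEq, and_true]
  omega

theorem firstRowCycle_apply_pred_zero :
    firstRowCycle hm hn (⟨m - 1, by omega⟩, ⟨0, by omega⟩) = (⟨0, by omega⟩, ⟨1, by omega⟩) := by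
  rw [firstRowCycle, mul_apply, swap_apply_right, rowRot_apply_self, finRotate_mk_of_succ_lt]

theorem firstRowCycle_apply_zero_of_succ_lt {j : ℕ} (hj : 1 ≤ j) (h : j + 1 < n) :
    firstRowCycle hm hn (⟨0, by omega⟩, ⟨j, by omega⟩) = (⟨0, by omega⟩, ⟨j + 1, h⟩) := by
  rw [firstRowCycle_apply_of_snd_ne hm hn (by simp; omega), rowRot_apply_self,
    finRotate_mk_of_succ_lt]

theorem firstRowCycle_apply_zero_pred :
    firstRowCycle hm hn (⟨0, by omega⟩, ⟨n - 1, by omega⟩) = (⟨0, by omega⟩, ⟨0, by omega⟩) := by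
  rw [firstRowCycle_apply_of_snd_ne hm hn (by simp; omega), rowRot_apply_self, finRotate_mk_pred]

theorem firstRowCycle_pow_apply {j : ℕ} (hj : 1 ≤ j) (h : j < n) :
    (firstRowCycle hm hn ^ (j + 1)) (⟨0, by omega⟩, ⟨0, by omega⟩) = (⟨0, by omega⟩, ⟨j, h⟩) := by
  induction j, hj using Nat.le_induction with
  | base =>
    rw [pow_succ', mul_apply, pow_one, firstRowCycle_apply_zero_zero,
      firstRowCycle_apply_pred_zero]
  | succ j hj ih =>
    rw [pow_succ', mul_apply, ih (by omega), firstRowCycle_apply_zero_of_succ_lt hm hn hj h]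

theorem isCycle_firstRowCycle : IsCycle (firstRowCycle hm hn) := by
  refine ⟨_, firstRowCycle_apply_zero_zero_ne hm hn, fun p hp => ?_⟩
  obtain ⟨⟨i, hi⟩, ⟨j, hj⟩⟩ := p
  by_cases hi0 : i = 0
  · subst hi0
    rcases Nat.eq_zero_or_pos j with rfl | hj0
    · exact SameCycle.refl _ _
    · exact ⟨(j + 1 : ℕ), by rw [zpow_natCast, firstRowCycle_pow_apply hm hn hj0 hj]⟩
  · by_cases hy : (⟨i, hi⟩, ⟨j, hj⟩) = ((⟨m - 1, by omega⟩, ⟨0, by omega⟩) : Fin m × Fin n)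
    · exact ⟨1, by rw [zpow_one, firstRowCycle_apply_zero_zero, hy]⟩
    · refine absurd ?_ hp
      rw [firstRowCycle, mul_apply, swap_apply_of_ne_of_ne _ hy,
        rowRot_apply_of_ne (by simpa [Fin.ext_iff] using hi0)]
      simp [Prod.ext_iff, Fin.ext_iff, hi0]

theorem firstRowCycle_pow_succ : firstRowCycle hm hn ^ (n + 1) = 1 := by
  refine ((isCycle_firstRowCycle hm hn).pow_eq_one_iff'
    (firstRowCycle_apply_zero_zero_ne hm hn)).2 ?_
  have h := firstRowCycle_pow_apply hm hn (j := n - 1) (by omega) (by omega)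
  rw [Nat.sub_add_cancel (by omega)] at h
  rw [pow_succ', mul_apply, h, firstRowCycle_apply_zero_pred]

theorem colRot_inv_mul_rowRot_mul_colRot :
    (colRot m n ⟨0, by omega⟩)⁻¹ * rowRot m n ⟨0, by omega⟩ * colRot m n ⟨0, by omega⟩ =
      swap (⟨0, by omega⟩, ⟨0, by omega⟩) (⟨m - 1, by omega⟩, ⟨0, by omega⟩) *
        rowRot m n ⟨0, by omega⟩ *
        swap (⟨0, by omega⟩, ⟨0, by omega⟩) (⟨m - 1, by omega⟩, ⟨0, by omega⟩) := by
  set c := colRot m n ⟨0, by omega⟩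
  set r := rowRot m n ⟨0, by omega⟩
  set τ := swap ((⟨0, by omega⟩, ⟨0, by omega⟩) : Fin m × Fin n) (⟨m - 1, by omega⟩, ⟨0, by omega⟩)
  have hfix : ∀ p : Fin m × Fin n, p.1.val = 0 → (c * τ) p = p := by
    rintro ⟨⟨i, hi⟩, ⟨j, hj⟩⟩ (rfl : i = 0)
    rcases Nat.eq_zero_or_pos j with rfl | hj0
    · rw [mul_apply, swap_apply_left, colRot_apply_self, finRotate_mk_pred]
    · rw [mul_apply, swap_apply_of_ne_of_ne (by simp; omega) (by simp; omega),
        colRot_apply_of_ne (by simp; omega)]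
  have hcomm : Commute r (c * τ) := Disjoint.commute fun p =>
    if h : p.1.val = 0 then Or.inr (hfix p h)
    else Or.inl (rowRot_apply_of_ne (by simpa [Fin.ext_iff] using h))
  calc c⁻¹ * r * c = c⁻¹ * (r * (c * τ)) * τ := by
        simp only [mul_assoc, swap_mul_self, mul_one, τ]
    _ = τ * r * τ := by rw [hcomm.eq]; simp only [mul_assoc, inv_mul_cancel_left]

end FirstRowCycle

theorem swap_sequence_of_even_n (m n : ℕ) (hm : 2 ≤ m) (hn : 2 ≤ n) (hne : Even n) :
    (rowRot m n ⟨0, by omega⟩ * (colRot m n ⟨0, by omega⟩) ^ (m - 1) *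
        rowRot m n ⟨0, by omega⟩ * colRot m n ⟨0, by omega⟩) ^ (n / 2 - 1) *
      (rowRot m n ⟨0, by omega⟩ * (colRot m n ⟨0, by omega⟩) ^ (m - 1) *
        (rowRot m n ⟨0, by omega⟩) ^ 2 * colRot m n ⟨0, by omega⟩) =
    Equiv.swap ((⟨0, by omega⟩ : Fin m), (⟨0, by omega⟩ : Fin n))
      ((⟨0, by omega⟩ : Fin m), (⟨n - 1, by omega⟩ : Fin n)) := by
  obtain ⟨k, hk⟩ : ∃ k, n = 2 * k + 2 := by
    obtain ⟨l, rfl⟩ := hne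
    exact ⟨l - 1, by omega⟩
  have hc : colRot m n ⟨0, by omega⟩ ^ (m - 1) = (colRot m n ⟨0, by omega⟩)⁻¹ :=
    eq_inv_of_mul_eq_one_left (by rw [← pow_succ, Nat.sub_add_cancel (by omega), colRot_pow_self])
  set σ := firstRowCycle hm hn
  have hσ : σ ^ n = σ⁻¹ :=
    eq_inv_of_mul_eq_one_left (by rw [← pow_succ, firstRowCycle_pow_succ])
  rw [hc, pow_mul_eq_of_inv_mul_mul_eq (colRot_inv_mul_rowRot_mul_colRot hm hn),
    show n / 2 - 1 = k by omega, ← hk]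
  change σ ^ n * _ * σ = _
  rw [hσ]
  nth_rw 2 [← inv_inv σ]
  rw [← swap_apply_apply, swap_comm,
    inv_eq_iff_eq.2 (firstRowCycle_apply_zero_zero hm hn).symm,
    inv_eq_iff_eq.2 (firstRowCycle_apply_zero_pred hm hn).symm]
end

section
/- Let m, n ≥ 2 be integers and let S* be the set of all compound rotations of the m × n Torus Puzzle, i.e., all permutations of the form ρ_i^k with 1 ≤ k ≤ n − 1 or γ_j^k with 1 ≤ k ≤ m − 1. Then there exists an element g of G(m,n) such that every finite list of elements of S* whose composition equals g has length at least log₂((m·n)! / 2) / log₂(2·m·n) − 1. In particular, some sortable m × n instance has drag number (and hence push number) Ω(m·n). -/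
/- The group G(m,n) generated by the unit rotations. -/
def torusGroup (m n : ℕ) : Subgroup (Equiv.Perm (Fin m × Fin n)) :=
  Subgroup.closure (unitRotations m n)

/- The set of compound rotations: nonzero powers of unit rotations. -/
def compoundRotations (m n : ℕ) : Set (Equiv.Perm (Fin m × Fin n)) :=
  {g | ∃ i : Fin m, ∃ k : ℕ, 1 ≤ k ∧ k ≤ n - 1 ∧ g = (rowRot m n i) ^ k} ∪
  {g | ∃ j : Fin n, ∃ k : ℕ, 1 ≤ k ∧ k ≤ m - 1 ∧ g = (colRot m n j) ^ k}

/-! At `p = (i, j)` the commutator of `ρ_i` and `γ_j` is the 3-cycle `p ↦ ρ_i p ↦ γ_j p ↦ p`.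
A block with two points is stable under every 3-cycle of the group, so a nontrivial block of
`G(m,n)` is closed under all unit moves and is the whole torus: `G(m,n)` is primitive, and by
Jordan's theorem it contains the alternating group, hence has at least `(mn)!/2` elements.
With the identity, the compound rotations are at most `2mn` permutations, so words of length `k`
in them reach at most `(2mn)^k` elements; some `g` therefore needs `(2mn)^k ≥ (mn)!/2`. -/

open Equiv Equiv.Perm MulAction
open scoped Pointwise Nat

theorem Equiv.Perm.IsCycle.mem_of_mapsTo {α : Type*} [Finite α] {σ : Perm α} (hσ : σ.IsCycle)
    {x y : α} (hx : σ x ≠ x) (hy : σ y ≠ y) {S : Set α} (hS : Set.MapsTo σ S S) (hxS : x ∈ S) :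
    y ∈ S := by
  obtain ⟨i, rfl⟩ := hσ.exists_pow_eq hx hy
  clear hy
  induction i with
  | zero => exact hxS
  | succ i ih => rw [pow_succ', Perm.mul_apply]; exact hS ih

section ThreeCycle

variable {α : Type*} [Fintype α] [DecidableEq α]

theorem Equiv.Perm.IsThreeCycle.eq_apply_or_apply_eq {g : Perm α} (h : g.IsThreeCycle)
    {x y : α} (hx : g x ≠ x) (hy : g y ≠ y) (hxy : y ≠ x) : y = g x ∨ g y = x := by
  obtain ⟨i, rfl⟩ := h.isCycle.exists_pow_eq hx hy
  have hg3 : g ^ 3 = 1 := h.orderOf ▸ pow_orderOf_eq_one g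
  rw [← pow_mod_orderOf, h.orderOf] at hxy ⊢
  have hi : i % 3 < 3 := Nat.mod_lt _ (by norm_num)
  interval_cases i % 3
  · exact absurd rfl hxy
  · exact Or.inl (pow_one g ▸ rfl)
  · right
    rw [← Perm.mul_apply, ← pow_succ', hg3, Perm.one_apply]

theorem MulAction.IsBlock.apply_mem_of_isThreeCycle {G : Subgroup (Perm α)} {B : Set α}
    (hB : IsBlock G B) (hB' : B.Nontrivial) {g : Perm α} (hg : g ∈ G) (h3 : g.IsThreeCycle)
    {x : α} (hx : x ∈ B) : g x ∈ B := by
  by_contra hgx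
  let k : G := ⟨g, hg⟩
  have hk : ∀ y ∈ B, g y ∈ k • B := fun y hy ↦ Set.smul_mem_smul_set hy
  obtain heq | hdisj := isBlock_iff_smul_eq_or_disjoint.mp hB k
  · exact hgx (heq ▸ hk x hx)
  obtain ⟨y, hy, hyx⟩ := hB'.exists_ne x
  have hgy : g y ∉ B := Set.disjoint_left.mp hdisj (hk y hy)
  rcases h3.eq_apply_or_apply_eq (fun h ↦ hgx (h ▸ hx)) (fun h ↦ hgy (h ▸ hy)) hyx with rfl | h
  · exact hgx hy
  · exact hgy (h ▸ hx)

end ThreeCycle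

theorem finRotate_apply_ne {n : ℕ} (hn : 2 ≤ n) (b : Fin n) : finRotate n b ≠ b := by
  obtain ⟨k, rfl⟩ := Nat.exists_eq_add_of_le' hn
  exact mem_support.1 (support_finRotate ▸ Finset.mem_univ b)

theorem Set.eq_univ_of_finRotate_mapsTo {n : ℕ} (hn : 2 ≤ n) {S : Set (Fin n)}
    (hne : S.Nonempty) (hS : Set.MapsTo (finRotate n) S S) : S = Set.univ := by
  obtain ⟨k, rfl⟩ := Nat.exists_eq_add_of_le' hn
  obtain ⟨x, hx⟩ := hne
  exact Set.eq_univ_of_forall fun y ↦ isCycle_finRotate.mem_of_mapsTo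
    (finRotate_apply_ne hn x) (finRotate_apply_ne hn y) hS hx

section Words

variable {M : Type*} [Monoid M] [DecidableEq M]

theorem List.prod_mem_finset_pow_length {s : Finset M} {L : List M} (h : ∀ x ∈ L, x ∈ s) :
    L.prod ∈ s ^ L.length := by
  induction L with
  | nil => simp
  | cons x L ih =>
    rw [List.prod_cons, List.length_cons, pow_succ']
    exact Finset.mul_mem_mul (h x List.mem_cons_self)
      (ih fun y hy ↦ h y (List.mem_cons_of_mem x hy))

theorem exists_forall_card_le_card_pow_length {T : Set M} (hT : T.Finite) (hne : T.Nonempty)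
    {V : Finset M} (h1 : 1 ∈ V) :
    ∃ g ∈ T, ∀ L : List M, (∀ x ∈ L, x ∈ V) → L.prod = g → Nat.card T ≤ V.card ^ L.length := by
  by_contra! h
  choose! w hwV hwprod hwlt using h
  obtain ⟨g₀, hg₀, hmax⟩ := Set.exists_max_image T (fun g ↦ (w g).length) hT hne
  have hsub : T ⊆ ↑(V ^ (w g₀).length) := fun g hg ↦ by
    have hw := List.prod_mem_finset_pow_length (hwV g hg)
    rw [hwprod g hg] at hw
    exact Finset.pow_subset_pow_right h1 (hmax g hg) hw
  have hcard := Nat.card_mono (Finset.finite_toSet _) hsub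
  rw [Finset.coe_sort_coe, Nat.card_eq_finsetCard] at hcard
  exact (hwlt g₀ hg₀).not_ge (hcard.trans Finset.card_pow_le)

end Words

theorem Real.logb_div_logb_le_of_le_pow {b x y : ℝ} {k : ℕ} (hb : 1 < b) (hx : 0 < x)
    (hy : 1 < y) (h : x ≤ y ^ k) : logb b x / logb b y ≤ k := by
  rw [div_le_iff₀ (logb_pos hb hy), ← logb_pow]
  exact logb_le_logb_of_le hb hx h

section Torus

variable {m n : ℕ}

theorem rowRot_apply (i : Fin m) (p : Fin m × Fin n) :
    rowRot m n i p = if p.1 = i then (i, finRotate n p.2) else p := rfl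

theorem colRot_apply (j : Fin n) (p : Fin m × Fin n) :
    colRot m n j p = if p.2 = j then (finRotate m p.1, j) else p := rfl

theorem rowRot_mem_torusGroup (i : Fin m) : rowRot m n i ∈ torusGroup m n :=
  Subgroup.subset_closure (Or.inl ⟨i, rfl⟩)

theorem colRot_mem_torusGroup (j : Fin n) : colRot m n j ∈ torusGroup m n :=
  Subgroup.subset_closure (Or.inr ⟨j, rfl⟩)

theorem Set.eq_univ_of_rowRot_colRot_closed (hm : 2 ≤ m) (hn : 2 ≤ n)
    {S : Set (Fin m × Fin n)} (hne : S.Nonempty) (hrow : ∀ p ∈ S, rowRot m n p.1 p ∈ S)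
    (hcol : ∀ p ∈ S, colRot m n p.2 p ∈ S) : S = Set.univ := by
  obtain ⟨⟨a, b⟩, hab⟩ := hne
  have hrowS : ∀ b', (a, b') ∈ S := Set.eq_univ_iff_forall.mp <|
    Set.eq_univ_of_finRotate_mapsTo (S := {b' | (a, b') ∈ S}) hn ⟨b, hab⟩
      fun b' hb' ↦ by simpa [rowRot_apply] using hrow _ hb'
  refine Set.eq_univ_of_forall fun ⟨a', b'⟩ ↦ Set.eq_univ_iff_forall.mp
    (Set.eq_univ_of_finRotate_mapsTo (S := {a' | (a', b') ∈ S}) hm ⟨a, hrowS b'⟩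
      fun a' ha' ↦ by simpa [colRot_apply] using hcol _ ha') a'

variable (m n) in
def cornerCycle (p : Fin m × Fin n) : Perm (Fin m × Fin n) :=
  swap p (colRot m n p.2 p) * swap p (rowRot m n p.1 p)

theorem rowRot_mul_colRot (hm : 2 ≤ m) (hn : 2 ≤ n) (p : Fin m × Fin n) :
    rowRot m n p.1 * colRot m n p.2 = cornerCycle m n p * (colRot m n p.2 * rowRot m n p.1) := by
  obtain ⟨i, j⟩ := p
  have hi := finRotate_apply_ne hm i
  have hj := finRotate_apply_ne hn j
  ext ⟨a, b⟩ : 1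
  by_cases ha : a = i <;> by_cases hb : b = j <;> by_cases ha' : finRotate m a = i <;>
    by_cases hb' : finRotate n b = j <;>
    simp [-finRotate_apply, cornerCycle, rowRot_apply, colRot_apply, swap_apply_def, *]

theorem cornerCycle_mem_torusGroup (hm : 2 ≤ m) (hn : 2 ≤ n) (p : Fin m × Fin n) :
    cornerCycle m n p ∈ torusGroup m n := by
  rw [← mul_inv_eq_iff_eq_mul.mpr (rowRot_mul_colRot hm hn p)]
  exact mul_mem (mul_mem (rowRot_mem_torusGroup _) (colRot_mem_torusGroup _))
    (inv_mem (mul_mem (colRot_mem_torusGroup _) (rowRot_mem_torusGroup _)))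

theorem isThreeCycle_cornerCycle (hm : 2 ≤ m) (hn : 2 ≤ n) (p : Fin m × Fin n) :
    (cornerCycle m n p).IsThreeCycle := by
  obtain ⟨i, j⟩ := p
  have hi := (finRotate_apply_ne hm i).symm
  have hj := (finRotate_apply_ne hn j).symm
  apply isThreeCycle_swap_mul_swap_same <;> simp [-finRotate_apply, rowRot_apply, colRot_apply, *]

theorem cornerCycle_apply_self (hn : 2 ≤ n) (p : Fin m × Fin n) :
    cornerCycle m n p p = rowRot m n p.1 p := by
  obtain ⟨i, j⟩ := p
  simp [-finRotate_apply, cornerCycle, rowRot_apply, colRot_apply, swap_apply_def,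
    finRotate_apply_ne, *]

theorem cornerCycle_apply_rowRot (p : Fin m × Fin n) :
    cornerCycle m n p (rowRot m n p.1 p) = colRot m n p.2 p := by
  simp [cornerCycle]

theorem isPreprimitive_torusGroup (hm : 2 ≤ m) (hn : 2 ≤ n) :
    IsPreprimitive (torusGroup m n) (Fin m × Fin n) := by
  let p₀ : Fin m × Fin n := (⟨0, by omega⟩, ⟨0, by omega⟩)
  refine IsPreprimitive.mk' (Set.ne_univ_iff_exists_notMem _ |>.mpr ⟨p₀, fun h ↦ ?_⟩)
    fun {B} hB ↦ ?_
  · have : rowRot m n p₀.1 p₀ = p₀ := h ⟨_, rowRot_mem_torusGroup p₀.1⟩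
    simp [-finRotate_apply, rowRot_apply, Prod.ext_iff, finRotate_apply_ne hn] at this
  rw [IsTrivialBlock, or_iff_not_imp_left, Set.not_subsingleton_iff]
  intro hB'
  have hcorner : ∀ p, ∀ q ∈ B, cornerCycle m n p q ∈ B := fun p q ↦
    hB.apply_mem_of_isThreeCycle hB' (cornerCycle_mem_torusGroup hm hn p)
      (isThreeCycle_cornerCycle hm hn p)
  have hrow : ∀ p ∈ B, rowRot m n p.1 p ∈ B := fun p hp ↦
    cornerCycle_apply_self hn p ▸ hcorner p p hp
  exact Set.eq_univ_of_rowRot_colRot_closed hm hn hB'.nonempty hrow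
    fun p hp ↦ cornerCycle_apply_rowRot p ▸ hcorner p _ (hrow p hp)

theorem factorial_le_two_mul_card_torusGroup (hm : 2 ≤ m) (hn : 2 ≤ n) :
    (m * n)! ≤ 2 * Nat.card (torusGroup m n) := by
  have : Nontrivial (Fin m × Fin n) := by
    have := Fin.nontrivial_iff_two_le.mpr hm
    have : Nonempty (Fin n) := ⟨⟨0, by omega⟩⟩
    infer_instance
  let p₀ : Fin m × Fin n := (⟨0, by omega⟩, ⟨0, by omega⟩)
  have hle := alternatingGroup_le_of_isPreprimitive_of_isThreeCycle_mem
    (isPreprimitive_torusGroup hm hn) (isThreeCycle_cornerCycle hm hn p₀)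
    (cornerCycle_mem_torusGroup hm hn p₀)
  calc (m * n)! = 2 * Nat.card (alternatingGroup (Fin m × Fin n)) := by
        rw [Nat.card_eq_fintype_card, two_mul_card_alternatingGroup, Fintype.card_perm,
          Fintype.card_prod, Fintype.card_fin, Fintype.card_fin]
    _ ≤ 2 * Nat.card (torusGroup m n) := Nat.mul_le_mul_left 2 (Subgroup.card_le_of_le hle)

variable (m n) in
def rotationPower : (Fin m × Fin n) ⊕ (Fin n × Fin m) → Perm (Fin m × Fin n) :=
  Sum.elim (fun p ↦ rowRot m n p.1 ^ (p.2 : ℕ)) fun q ↦ colRot m n q.1 ^ (q.2 : ℕ)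

theorem compoundRotations_subset_range_rotationPower :
    compoundRotations m n ⊆ Set.range (rotationPower m n) := by
  rintro g (⟨i, k, hk1, hk, rfl⟩ | ⟨j, k, hk1, hk, rfl⟩)
  · exact ⟨.inl (i, ⟨k, by omega⟩), rfl⟩
  · exact ⟨.inr (j, ⟨k, by omega⟩), rfl⟩

theorem card_image_rotationPower_le : (Finset.univ.image (rotationPower m n)).card ≤ 2 * m * n :=
  Finset.card_image_le.trans (le_of_eq (by
    simp only [Finset.card_univ, Fintype.card_sum, Fintype.card_prod, Fintype.card_fin]; ring))

theorem one_mem_range_rotationPower (hm : 0 < m) (hn : 0 < n) :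
    1 ∈ Set.range (rotationPower m n) :=
  ⟨.inl (⟨0, hm⟩, ⟨0, hn⟩), pow_zero _⟩

end Torus

theorem drag_number_lower_bound (m n : ℕ) (hm : 2 ≤ m) (hn : 2 ≤ n) :
    ∃ g ∈ torusGroup m n,
      ∀ L : List (Equiv.Perm (Fin m × Fin n)),
        (∀ x ∈ L, x ∈ compoundRotations m n) → L.prod = g →
        Real.logb 2 ((Nat.factorial (m * n) : ℝ) / 2) / Real.logb 2 (2 * m * n) - 1 ≤
          (L.length : ℝ) := by
  let V := Finset.univ.image (rotationPower m n)
  have hV : ∀ x ∈ Set.range (rotationPower m n), x ∈ V := by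
    rintro _ ⟨z, rfl⟩
    exact Finset.mem_image_of_mem _ (Finset.mem_univ z)
  obtain ⟨g, hg, hlen⟩ := exists_forall_card_le_card_pow_length
    (Set.toFinite (torusGroup m n : Set _)) ⟨1, one_mem _⟩
    (hV _ (one_mem_range_rotationPower (by omega) (by omega)))
  refine ⟨g, hg, fun L hL hprod ↦ ?_⟩
  have hcount : (m * n)! ≤ (2 * m * n) ^ L.length * 2 := by
    have hwords := hlen L (fun x hx ↦ hV x (compoundRotations_subset_range_rotationPower (hL x hx)))
      hprod
    have := (factorial_le_two_mul_card_torusGroup hm hn).trans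
      (Nat.mul_le_mul_left 2 (hwords.trans (Nat.pow_le_pow_left card_image_rotationPower_le _)))
    linarith
  have hsize : (1 : ℝ) < 2 * m * n := by norm_cast; nlinarith
  have hcount' : ((m * n)! : ℝ) / 2 ≤ (2 * m * n) ^ L.length :=
    (div_le_iff₀ two_pos).mpr (by exact_mod_cast hcount)
  have := Real.logb_div_logb_le_of_le_pow one_lt_two (by positivity) hsize hcount'
  linarith
end
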